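/- For all n ≥ 0, ∑_{π} q^{inv(π)} = (1 + q)^n, where the sum runs over all permutations π of {1, …, n+1} satisfying −1 ≤ π(i) − i ≤ n for all i (that is, pB_{n,1}(q) = (1+q)^n). -/

import Mathlib

open Finset Polynomial

attribute [local instance] Classical.propDecidable

/-- A Vesztergombi permutation with `k = 1`: a permutation `π` of `{1, …, n+1}`
(modelled on `Fin (n+1)`) with `-1 ≤ π(i) - i ≤ n` for all `i`. -/
def IsVesztergombiOne (n : ℕ) (π : Equiv.Perm (Fin (n + 1))) : Prop :=
  ∀ i, -(1 : ℤ) ≤ (π i : ℤ) - (i : ℤ) ∧ (π i : ℤ) - (i : ℤ) ≤ (n : ℤ)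

/-- The number of inversions of a permutation: pairs `i < j` with `π(i) > π(j)`. -/
def inversions {N : ℕ} (π : Equiv.Perm (Fin N)) : ℕ :=
  ((Finset.univ ×ˢ Finset.univ).filter
    (fun p : Fin N × Fin N => p.1 < p.2 ∧ π p.2 < π p.1)).card

/-!
The smallest value `0` of a Vesztergombi permutation of `{0, …, n + 1}` sits at position `0` or
`1`, since `π⁻¹ 0 ≤ 0 + 1`. Deleting it and lowering the other values by one is a bijection onto
the pairs (Vesztergombi permutation of `{0, …, n}`, position of `0`), and the position, `0` or
`1`, is exactly the number of inversions it adds. Hence `pB_{n+1,1} = (1 + q) pB_{n,1}`.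
-/

open Equiv

theorem inversions_eq_sum {N : ℕ} (π : Perm (Fin N)) :
    inversions π = ∑ i, ∑ j, if i < j ∧ π j < π i then 1 else 0 := by
  rw [inversions, card_filter, sum_product]

theorem isVesztergombiOne_iff {n : ℕ} (π : Perm (Fin (n + 1))) :
    IsVesztergombiOne n π ↔ ∀ i : Fin (n + 1), (i : ℕ) ≤ (π i : ℕ) + 1 := by
  refine forall_congr' fun i => ?_
  have := (π i).is_lt
  omega

namespace Equiv.Perm

variable {n : ℕ}

def liftSucc (σ : Perm (Fin n)) : Perm (Fin (n + 1)) :=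
  decomposeFin.symm (0, σ)

@[simp]
theorem liftSucc_zero (σ : Perm (Fin n)) : liftSucc σ 0 = 0 := by
  simp [liftSucc]

@[simp]
theorem liftSucc_succ (σ : Perm (Fin n)) (i : Fin n) : liftSucc σ i.succ = (σ i).succ := by
  simp [liftSucc]

@[simp]
theorem liftSucc_one (σ : Perm (Fin (n + 1))) : liftSucc σ 1 = (σ 0).succ := by
  rw [← Fin.succ_zero_eq_one, liftSucc_succ]

theorem liftSucc_injective : Function.Injective (liftSucc (n := n)) := fun _ _ h =>
  Prod.ext_iff.mp (decomposeFin.symm.injective h) |>.2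

theorem exists_liftSucc_eq {π : Perm (Fin (n + 1))} (h : π 0 = 0) : ∃ σ, liftSucc σ = π := by
  refine ⟨(decomposeFin π).2, ?_⟩
  have hfst : (decomposeFin π).1 = 0 := by
    simpa [h] using (decomposeFin_symm_apply_zero (decomposeFin π).1 (decomposeFin π).2).symm
  rw [liftSucc, ← hfst, Prod.mk.eta, symm_apply_apply]

end Equiv.Perm

open Equiv.Perm

theorem inversions_liftSucc {n : ℕ} (σ : Perm (Fin n)) :
    inversions (liftSucc σ) = inversions σ := by
  rw [inversions_eq_sum, inversions_eq_sum]
  simp [Fin.sum_univ_succ, -sum_boole]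

theorem inversions_mul_swap_zero_one {n : ℕ} (π : Perm (Fin (n + 2))) (h : π 0 < π 1) :
    inversions (π * swap 0 1) = inversions π + 1 := by
  have hs : ∀ i : Fin n, swap (0 : Fin (n + 2)) 1 i.succ.succ = i.succ.succ := fun i =>
    swap_apply_of_ne_of_ne (Fin.succ_ne_zero _) (Fin.succ_succ_ne_one i)
  rw [inversions_eq_sum, inversions_eq_sum]
  simp only [Perm.coe_mul, Function.comp_apply, Fin.sum_univ_succ, not_lt_zero, swap_apply_left,
    false_and, ↓reduceIte, Fin.succ_zero_eq_one, Fin.lt_one_iff, swap_apply_right, hs, zero_add, h,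
    and_self, Fin.succ_pos, true_and, Fin.succ_ne_zero, Fin.succ_lt_succ_iff, h.not_gt, and_false]
  ring

section Vesztergombi

variable {n : ℕ}

/-- In one-line notation: the word of `σ` with all values raised by one and the new value `0`
inserted at position `0` (`b = false`) or `1` (`b = true`). -/
def insertMin (σ : Perm (Fin (n + 1))) (b : Bool) : Perm (Fin (n + 2)) :=
  liftSucc σ * if b then swap 0 1 else 1

theorem insertMin_succ (σ : Perm (Fin (n + 1))) (b : Bool) {k : Fin (n + 1)} (hk : k ≠ 0) :
    insertMin σ b k.succ = (σ k).succ := by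
  have hk1 : k.succ ≠ 1 := by
    rwa [← Fin.succ_zero_eq_one, Ne, Fin.succ_inj]
  cases b <;> simp [insertMin, swap_apply_of_ne_of_ne (Fin.succ_ne_zero k) hk1]

theorem insertMin_zero_eq_zero_iff (σ : Perm (Fin (n + 1))) (b : Bool) :
    insertMin σ b 0 = 0 ↔ b = false := by
  cases b <;> simp [insertMin]

theorem insertMin_injective : Function.Injective (Function.uncurry (insertMin (n := n))) := by
  rintro ⟨σ, b⟩ ⟨τ, c⟩ h
  change insertMin σ b = insertMin τ c at h
  have hbc : b = c := by
    have h0 := congrArg (fun π => π 0 = 0) h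
    simp only [insertMin_zero_eq_zero_iff, eq_iff_iff] at h0
    cases b <;> cases c <;> simp_all
  subst hbc
  simp only [insertMin, mul_left_inj] at h
  rw [liftSucc_injective h]

theorem inversions_insertMin (σ : Perm (Fin (n + 1))) (b : Bool) :
    inversions (insertMin σ b) = inversions σ + b.toNat := by
  cases b
  · simp [insertMin, inversions_liftSucc]
  · rw [insertMin, if_pos rfl, inversions_mul_swap_zero_one _ (by simp),
      inversions_liftSucc, Bool.toNat_true]

theorem isVesztergombiOne_insertMin (σ : Perm (Fin (n + 1))) (b : Bool) :
    IsVesztergombiOne (n + 1) (insertMin σ b) ↔ IsVesztergombiOne n σ := by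
  simp only [isVesztergombiOne_iff]
  constructor
  · intro h k
    rcases eq_or_ne k 0 with rfl | hk
    · simp
    · simpa [insertMin_succ σ b hk] using h k.succ
  · intro h i
    rcases Fin.eq_zero_or_eq_succ i with rfl | ⟨k, rfl⟩
    · simp
    rcases eq_or_ne k 0 with rfl | hk
    · simp
    · simpa [insertMin_succ σ b hk] using h k

theorem apply_one_eq_zero {π : Perm (Fin (n + 2))} (h : IsVesztergombiOne (n + 1) π)
    (h0 : π 0 ≠ 0) : π 1 = 0 := by
  have hm := (isVesztergombiOne_iff π).1 h (π.symm 0)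
  have hne : π.symm 0 ≠ 0 := fun e => h0 (by simpa [e] using π.apply_symm_apply 0)
  have h1 : π.symm 0 = 1 := by
    rw [apply_symm_apply, Fin.val_zero] at hm
    rw [Ne, Fin.ext_iff, Fin.val_zero] at hne
    rw [Fin.ext_iff, Fin.val_one]
    omega
  rw [← h1, apply_symm_apply]

theorem exists_insertMin_eq {π : Perm (Fin (n + 2))} (h : IsVesztergombiOne (n + 1) π) :
    ∃ σ b, insertMin σ b = π := by
  by_cases h0 : π 0 = 0
  · obtain ⟨σ, rfl⟩ := exists_liftSucc_eq h0
    exact ⟨σ, false, by simp [insertMin]⟩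
  · have h1 : (π * swap 0 1 : Perm (Fin (n + 2))) 0 = 0 := by simp [apply_one_eq_zero h h0]
    obtain ⟨σ, hσ⟩ := exists_liftSucc_eq h1
    exact ⟨σ, true, by simp [insertMin, hσ, mul_assoc]⟩

theorem filter_isVesztergombiOne_succ :
    univ.filter (IsVesztergombiOne (n + 1)) =
      (univ.filter (IsVesztergombiOne n) ×ˢ univ).image (Function.uncurry insertMin) := by
  ext π
  simp only [mem_filter, mem_univ, true_and, mem_image, mem_product, and_true, Prod.exists,
    Function.uncurry_apply_pair]
  constructor
  · intro h
    obtain ⟨σ, b, rfl⟩ := exists_insertMin_eq h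
    exact ⟨σ, b, (isVesztergombiOne_insertMin σ b).1 h, rfl⟩
  · rintro ⟨σ, b, hσ, rfl⟩
    exact (isVesztergombiOne_insertMin σ b).2 hσ

end Vesztergombi

theorem pB_n_one (n : ℕ) :
    (∑ π ∈ Finset.univ.filter (fun π : Equiv.Perm (Fin (n + 1)) => IsVesztergombiOne n π),
        (Polynomial.X : Polynomial ℚ) ^ inversions π)
      = (1 + Polynomial.X : Polynomial ℚ) ^ n := by
  induction n with
  | zero => simp [IsVesztergombiOne, inversions, filter_singleton]
  | succ n ih =>
    rw [filter_isVesztergombiOne_succ, sum_image insertMin_injective.injOn, sum_product, pow_succ,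
      ← ih, sum_mul]
    refine sum_congr rfl fun σ _ => ?_
    rw [Fintype.sum_bool]
    simp only [Function.uncurry_apply_pair, inversions_insertMin, Bool.toNat_true,
      Bool.toNat_false, add_zero, pow_succ]
    ring
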